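/- If 0 < p < q − 1, then for any admissible x_0 the partial products ∏_{i=0}^n x_i = q^n x_0/(W_{n+1} + x_0 W_n) of the solution of x_{n+1} = q/(p + x_n) diverge (tend to infinity in absolute value). -/

import Mathlib

/-!
Clearing denominators in `x (n + 1) * (p + x n) = q` shows that the partial product times
`D n = W (n + 1) + x 0 * W n` equals `q ^ n * x 0`. The sequence `D` satisfies the same
recurrence as `W`, so it grows at most like `r ^ n` for any `r > 0` with `p * r + q ≤ r ^ 2`;
when `p + 1 < q` the choice `r = (p + q + 1) / 2` is such a root bound with `r < q`, so the
products grow at least like `(q / r) ^ n`.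
-/

def W (p q : ℝ) : ℕ → ℝ
  | 0 => 0
  | 1 => 1
  | n + 2 => p * W p q (n + 1) + q * W p q n

open Filter Finset

theorem W_add_two (p q : ℝ) (n : ℕ) : W p q (n + 2) = p * W p q (n + 1) + q * W p q n := rfl

theorem le_mul_pow_of_linear_recurrence {p q r C : ℝ} {D : ℕ → ℝ} (hp : 0 ≤ p) (hq : 0 ≤ q)
    (hr : 0 < r) (hC : 0 ≤ C) (hroot : p * r + q ≤ r ^ 2)
    (hD : ∀ n, D (n + 2) = p * D (n + 1) + q * D n) (hD0 : D 0 ≤ C) (hD1 : D 1 ≤ C * r) :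
    ∀ n, D n ≤ C * r ^ n := by
  intro n
  induction n using Nat.twoStepInduction with
  | zero => simpa using hD0
  | one => simpa using hD1
  | more n ih₀ ih₁ =>
    calc D (n + 2) = p * D (n + 1) + q * D n := hD n
      _ ≤ p * (C * r ^ (n + 1)) + q * (C * r ^ n) := by gcongr
      _ = C * r ^ n * (p * r + q) := by ring
      _ ≤ C * r ^ n * r ^ 2 := by gcongr
      _ = C * r ^ (n + 2) := by ring

theorem tendsto_atTop_of_mul_eq_pow {q r C a : ℝ} {f D : ℕ → ℝ} (hr : 0 < r) (hrq : r < q)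
    (hC : 0 < C) (ha : 0 < a) (hf : ∀ n, 0 ≤ f n) (hfD : ∀ n, f n * D n = q ^ n * a)
    (hD : ∀ n, D n ≤ C * r ^ n) : Tendsto f atTop atTop := by
  have hgeom : Tendsto (fun n : ℕ => a / C * (q / r) ^ n) atTop atTop :=
    (tendsto_pow_atTop_atTop_of_one_lt ((one_lt_div hr).mpr hrq)).const_mul_atTop (by positivity)
  refine tendsto_atTop_mono (fun n => ?_) hgeom
  have hCr : 0 < C * r ^ n := by positivity
  refine le_of_mul_le_mul_right ?_ hCr
  calc a / C * (q / r) ^ n * (C * r ^ n) = f n * D n := by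
        rw [hfD, div_pow]; field_simp
    _ ≤ f n * (C * r ^ n) := mul_le_mul_of_nonneg_left (hD n) (hf n)

section PartialProducts

variable {p q : ℝ} {x : ℕ → ℝ}

def partialDenom (p q a : ℝ) (n : ℕ) : ℝ := W p q (n + 1) + a * W p q n

theorem partialDenom_zero (a : ℝ) : partialDenom p q a 0 = 1 := by
  simp [partialDenom, W]

theorem partialDenom_one (a : ℝ) : partialDenom p q a 1 = p + a := by
  simp [partialDenom, W]

theorem partialDenom_add_two (a : ℝ) (n : ℕ) :
    partialDenom p q a (n + 2) = p * partialDenom p q a (n + 1) + q * partialDenom p q a n := by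
  simp only [partialDenom, W_add_two]
  ring

theorem add_mul_partialDenom (hx : ∀ n, x (n + 1) * (p + x n) = q) (n : ℕ) :
    (p + x n) * partialDenom p q (x 0) n = partialDenom p q (x 0) (n + 1) := by
  induction n with
  | zero => rw [partialDenom_zero, partialDenom_one, mul_one]
  | succ n ih =>
    rw [partialDenom_add_two, ← ih, ← hx n]
    ring

theorem prod_range_mul_partialDenom (hx : ∀ n, x (n + 1) * (p + x n) = q) (n : ℕ) :
    (∏ i ∈ range (n + 1), x i) * partialDenom p q (x 0) n = q ^ n * x 0 := by
  induction n with
  | zero => simp [partialDenom_zero]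
  | succ n ih =>
    rw [prod_range_succ, ← add_mul_partialDenom hx]
    linear_combination (x (n + 1) * (p + x n)) * ih + q ^ n * x 0 * hx n

end PartialProducts

theorem stmt_13 (p q : ℝ) (hp : 0 < p) (hq : 0 < q) (hpq : p < q - 1) (x : ℕ → ℝ)
    (hrec : ∀ n : ℕ, x (n + 1) = q / (p + x n))
    (hx0 : x 0 > 0) :
    Filter.Tendsto (fun n : ℕ => |∏ i ∈ Finset.range (n + 1), x i|)
      Filter.atTop Filter.atTop := by
  have hxpos : ∀ n, 0 < x n := by
    intro n
    induction n with
    | zero => exact hx0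
    | succ n ih => rw [hrec]; exact div_pos hq (by linarith)
  have hx : ∀ n, x (n + 1) * (p + x n) = q := fun n => by
    rw [hrec, div_mul_cancel₀ _ (by linarith [hxpos n])]
  have hprod : ∀ n, 0 < ∏ i ∈ range (n + 1), x i := fun n => prod_pos fun i _ => hxpos i
  set r := (p + q + 1) / 2 with hr_def
  have hr : 0 < r := by positivity
  have hrq : r < q := by linarith
  -- `r ^ 2 - p * r - q = ((q - 1) ^ 2 - p ^ 2) / 4`
  have hroot : p * r + q ≤ r ^ 2 := by
    rw [hr_def]; nlinarith [mul_pos (sub_pos.2 hpq) (by linarith : 0 < q - 1 + p)]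
  have hbound := le_mul_pow_of_linear_recurrence (D := partialDenom p q (x 0))
    (C := 1 + (p + x 0) / r) hp.le hq.le hr (by positivity) hroot (partialDenom_add_two _)
    (by rw [partialDenom_zero]; linarith [show 0 ≤ (p + x 0) / r by positivity])
    (by rw [partialDenom_one, add_mul, div_mul_cancel₀ _ hr.ne']; linarith)
  simp_rw [abs_of_pos (hprod _)]
  exact tendsto_atTop_of_mul_eq_pow hr hrq (by positivity) hx0
    (fun n => (hprod n).le) (prod_range_mul_partialDenom hx) hbound
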